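/- Let (R, m, k) be an F-finite local ring of prime characteristic p and M a finitely generated R-module with depth_R(M) = 0. Then for all sufficiently large e, the residue field k is a direct summand of {}^{f^e} M (as a left R-module). -/

import Mathlib

open scoped TensorProduct

universe u v

/-- `R` viewed as an `R`-algebra via the `e`-th iterate of the Frobenius map. -/
def FrobAlg (R : Type u) [CommRing R] (p : ℕ) [ExpChar R p] (_e : ℕ) : Type u := R

instance (R : Type u) [CommRing R] (p : ℕ) [ExpChar R p] (e : ℕ) :
    CommRing (FrobAlg R p e) := inferInstanceAs (CommRing R)

/-- The `e`-th iterated Frobenius, viewed as a ring map `R →+* FrobAlg R p e`. -/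
def frobToAlg (R : Type u) [CommRing R] (p : ℕ) [ExpChar R p] (e : ℕ) :
    R →+* FrobAlg R p e := iterateFrobenius R p e

instance (R : Type u) [CommRing R] (p : ℕ) [ExpChar R p] (e : ℕ) :
    Algebra R (FrobAlg R p e) := (frobToAlg R p e).toAlgebra

/-- Restriction of scalars along the `e`-th Frobenius: `{}^{f^e} M`. -/
def FrobRes (R : Type u) [CommRing R] (p : ℕ) [ExpChar R p] (_e : ℕ) (M : Type v) : Type v := M

instance (R : Type u) [CommRing R] (p : ℕ) [ExpChar R p] (e : ℕ) (M : Type v) [AddCommGroup M] :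
    AddCommGroup (FrobRes R p e M) := inferInstanceAs (AddCommGroup M)

instance (R : Type u) [CommRing R] (p : ℕ) [ExpChar R p] (e : ℕ) (M : Type v)
    [AddCommGroup M] [Module R M] : Module R (FrobRes R p e M) :=
  Module.compHom M (iterateFrobenius R p e)

/-- The `e`-th Peskine–Szpiro (Frobenius) functor `F^e(M) = M ⊗_R {}^{f^e} R`,
realized as base change along the `e`-th Frobenius. -/
def FrobF (R : Type u) [CommRing R] (p : ℕ) [ExpChar R p] (e : ℕ)
    (M : Type u) [AddCommGroup M] [Module R M] : Type u :=
  FrobAlg R p e ⊗[R] M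

noncomputable instance (R : Type u) [CommRing R] (p : ℕ) [ExpChar R p] (e : ℕ)
    (M : Type u) [AddCommGroup M] [Module R M] : AddCommGroup (FrobF R p e M) :=
  inferInstanceAs (AddCommGroup (FrobAlg R p e ⊗[R] M))

noncomputable instance (R : Type u) [CommRing R] (p : ℕ) [ExpChar R p] (e : ℕ)
    (M : Type u) [AddCommGroup M] [Module R M] : Module (FrobAlg R p e) (FrobF R p e M) :=
  inferInstanceAs (Module (FrobAlg R p e) (FrobAlg R p e ⊗[R] M))

/-- The action of `F^e` on maps. -/
noncomputable def FrobFMap (R : Type u) [CommRing R] (p : ℕ) [ExpChar R p] (e : ℕ)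
    {M N : Type u} [AddCommGroup M] [Module R M] [AddCommGroup N] [Module R N]
    (g : M →ₗ[R] N) : FrobF R p e M →ₗ[FrobAlg R p e] FrobF R p e N :=
  LinearMap.baseChange (FrobAlg R p e) g

/-- The dual Frobenius functor `F̃^e(M) = Hom_R({}^{f^e} R, M)`. -/
def FrobFt (R : Type u) [CommRing R] (p : ℕ) [ExpChar R p] (e : ℕ)
    (M : Type v) [AddCommGroup M] [Module R M] : Type (max u v) :=
  FrobAlg R p e →ₗ[R] M

instance (R : Type u) [CommRing R] (p : ℕ) [ExpChar R p] (e : ℕ) (M : Type v)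
    [AddCommGroup M] [Module R M] : AddCommGroup (FrobFt R p e M) :=
  inferInstanceAs (AddCommGroup (FrobAlg R p e →ₗ[R] M))

/-- The (untwisted) module structure on `F̃^e(M)`, given by `(a • θ)(s) = θ (a * s)`. -/
instance (R : Type u) [CommRing R] (p : ℕ) [ExpChar R p] (e : ℕ) (M : Type v)
    [AddCommGroup M] [Module R M] : Module (FrobAlg R p e) (FrobFt R p e M) where
  smul a θ := LinearMap.comp (σ₁₂ := RingHom.id R) θ (LinearMap.mulLeft R a)
  one_smul θ := by
    change LinearMap.comp (σ₁₂ := RingHom.id R) θ (LinearMap.mulLeft R 1) = θ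
    ext s; exact congrArg (show FrobAlg R p e →ₗ[R] M from θ) (one_mul s)
  mul_smul a b θ := by
    change LinearMap.comp (σ₁₂ := RingHom.id R) θ (LinearMap.mulLeft R (a * b)) =
      LinearMap.comp (σ₁₂ := RingHom.id R)
        (LinearMap.comp (σ₁₂ := RingHom.id R) θ (LinearMap.mulLeft R b)) (LinearMap.mulLeft R a)
    ext s; exact congrArg (show FrobAlg R p e →ₗ[R] M from θ) (by ring : a * b * s = b * (a * s))
  smul_zero a := by apply LinearMap.ext; intro s; rfl
  smul_add a θ₁ θ₂ := by apply LinearMap.ext; intro s; rfl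
  add_smul a b θ := by
    change LinearMap.comp (σ₁₂ := RingHom.id R) θ (LinearMap.mulLeft R (a + b)) =
      LinearMap.comp (σ₁₂ := RingHom.id R) θ (LinearMap.mulLeft R a) +
      LinearMap.comp (σ₁₂ := RingHom.id R) θ (LinearMap.mulLeft R b)
    ext s; exact (congrArg (show FrobAlg R p e →ₗ[R] M from θ) (add_mul a b s)).trans (map_add (show FrobAlg R p e →ₗ[R] M from θ) _ _)
  zero_smul θ := by
    change LinearMap.comp (σ₁₂ := RingHom.id R) θ (LinearMap.mulLeft R 0) = 0
    ext s; exact (congrArg (show FrobAlg R p e →ₗ[R] M from θ) (zero_mul s)).trans (map_zero (show FrobAlg R p e →ₗ[R] M from θ))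

/-- The action of `F̃^e` on maps. -/
def FrobFtMap (R : Type u) [CommRing R] (p : ℕ) [ExpChar R p] (e : ℕ)
    {M N : Type v} [AddCommGroup M] [Module R M] [AddCommGroup N] [Module R N]
    (g : M →ₗ[R] N) : FrobFt R p e M →ₗ[FrobAlg R p e] FrobFt R p e N where
  toFun θ := g.comp θ
  map_add' θ₁ θ₂ := by apply LinearMap.ext; intro s; exact map_add g ((show FrobAlg R p e →ₗ[R] M from θ₁) s) ((show FrobAlg R p e →ₗ[R] M from θ₂) s)
  map_smul' a θ := by apply LinearMap.ext; intro s; rfl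

/-- Any `R`-module is a module over `FrobAlg R p e` via the untwisted action. -/
def untwist (R : Type u) [CommRing R] (p : ℕ) [ExpChar R p] (e : ℕ)
    (M : Type v) [AddCommGroup M] [Module R M] : Module (FrobAlg R p e) M :=
  (inferInstance : Module R M)

/-- `R` is `F`-finite: `{}^f R` is a finitely generated (left) `R`-module. -/
def IsFFinite (R : Type u) [CommRing R] (p : ℕ) [ExpChar R p] : Prop :=
  Module.Finite R (FrobRes R p 1 R)

/-- `R` is FPI: the Frobenius functor preserves injective modules. -/
def IsFPI (R : Type u) [CommRing R] (p : ℕ) [ExpChar R p] : Prop :=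
  ∀ (I : Type u) (_ : AddCommGroup I) (_ : Module R I),
    Module.Injective R I → Module.Injective (FrobAlg R p 1) (FrobF R p 1 I)

/-!
If `𝔪` is the annihilator of `x ∈ M`, then `x` spans a copy of `k` in `{}^{f^e} M` for every
`e`. By Krull's intersection theorem `x ∉ 𝔪 ^ n M` for some `n`, and since
`𝔪 • {}^{f^e} M = 𝔪^{[p^e]} M ⊆ 𝔪 ^ (p ^ e) M`, the image of `x` in the `k`-vector space
`{}^{f^e} M / 𝔪 • {}^{f^e} M` is nonzero once `p ^ e ≥ n`; a functional sending it to `1`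
splits the inclusion of `k`.
-/

open Filter IsLocalRing

theorem IsLocalRing.eventually_notMem_pow_smul_top {R M : Type*} [CommRing R] [IsNoetherianRing R]
    [IsLocalRing R] [AddCommGroup M] [Module R M] [Module.Finite R M] {I : Ideal R} (hI : I ≠ ⊤)
    {x : M} (hx : x ≠ 0) : ∀ᶠ n in atTop, x ∉ I ^ n • (⊤ : Submodule R M) := by
  obtain ⟨n, hn⟩ : ∃ n, x ∉ I ^ n • (⊤ : Submodule R M) := by
    by_contra! h
    exact hx <| by
      simpa [I.iInf_pow_smul_eq_bot_of_isLocalRing hI] using (Submodule.mem_iInf _).mpr h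
  exact eventually_atTop.mpr
    ⟨n, fun k hk hxk => hn (Submodule.smul_mono_left (Ideal.pow_le_pow_right hk) hxk)⟩

theorem FrobRes.mem_pow_smul_top_of_mem_smul_top {R M : Type*} [CommRing R] {p : ℕ} [ExpChar R p]
    {e : ℕ} [AddCommGroup M] [Module R M] {I : Ideal R} {y : M}
    (hy : y ∈ I • (⊤ : Submodule R (FrobRes R p e M))) : y ∈ I ^ p ^ e • (⊤ : Submodule R M) :=
  -- `@id M z` reads `z : FrobRes R p e M` back as an element of `M`.
  Submodule.smul_induction_on (p := fun z : FrobRes R p e M => @id M z ∈ I ^ p ^ e • ⊤) hy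
    (fun _ hr _ _ => Submodule.smul_mem_smul (Ideal.pow_mem_pow hr _) trivial)
    (fun _ _ => Submodule.add_mem _)

theorem IsLocalRing.exists_residueField_retract {R N : Type*} [CommRing R] [IsLocalRing R]
    [AddCommGroup N] [Module R N] {x : N} (hann : ∀ r ∈ maximalIdeal R, r • x = 0)
    (hx : x ∉ maximalIdeal R • (⊤ : Submodule R N)) :
    ∃ (ι : ResidueField R →ₗ[R] N) (π : N →ₗ[R] ResidueField R), π ∘ₗ ι = LinearMap.id := by
  let ι : ResidueField R →ₗ[R] N :=
    (maximalIdeal R).liftQ (LinearMap.toSpanSingleton R N x) fun r hr => hann r hr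
  let : Module (ResidueField R) (N ⧸ maximalIdeal R • (⊤ : Submodule R N)) :=
    inferInstanceAs (Module (R ⧸ maximalIdeal R) _)
  have hx_ne : Submodule.Quotient.mk (p := maximalIdeal R • (⊤ : Submodule R N)) x ≠ 0 := by
    rwa [Ne, Submodule.Quotient.mk_eq_zero]
  obtain ⟨f, hf⟩ : ∃ f : Module.Dual (ResidueField R) _, f (Submodule.Quotient.mk x) = 1 :=
    let ⟨f, hf⟩ := Module.exists_dual_forall_apply_eq_one (LinearIndepOn.singleton (v := id) hx_ne)
    ⟨f, hf _ rfl⟩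
  have : IsScalarTower R (ResidueField R) (N ⧸ maximalIdeal R • (⊤ : Submodule R N)) :=
    ⟨fun r c q => by
      obtain ⟨c, rfl⟩ := Ideal.Quotient.mk_surjective c
      induction q using Submodule.Quotient.induction_on
      exact congrArg Submodule.Quotient.mk (mul_smul r c _)⟩
  refine ⟨ι, f.restrictScalars R ∘ₗ Submodule.mkQ _, ?_⟩
  ext c
  obtain ⟨r, rfl⟩ := residue_surjective c
  change f (Submodule.Quotient.mk (r • x)) = residue R r
  rw [Submodule.Quotient.mk_smul, LinearMap.map_smul_of_tower, hf, Algebra.smul_def, mul_one,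
    ResidueField.algebraMap_eq]

theorem residueField_summand_of_depth_zero_general (R : Type u) [CommRing R]
    [IsNoetherianRing R] [IsLocalRing R] (p : ℕ) [Fact p.Prime] [CharP R p]
    (M : Type u) [AddCommGroup M] [Module R M] [Module.Finite R M]
    (hdepth : IsLocalRing.maximalIdeal R ∈ associatedPrimes R M) :
    ∃ E : ℕ, ∀ e : ℕ, E ≤ e →
      ∃ (ι : IsLocalRing.ResidueField R →ₗ[R] FrobRes R p e M)
        (π : FrobRes R p e M →ₗ[R] IsLocalRing.ResidueField R),
          π ∘ₗ ι = LinearMap.id := by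
  obtain ⟨hprime, x, hx⟩ := isAssociatedPrime_iff.mp hdepth
  have hann : ∀ r ∈ maximalIdeal R, r • x = 0 := fun r hr => by
    simpa using (hx.le hr : r ∈ (⊥ : Submodule R M).colon {x})
  have hx0 : x ≠ 0 := by
    rintro rfl
    exact hprime.ne_top (by rw [hx]; simp)
  have hp := (Fact.out : p.Prime)
  obtain ⟨E, hE⟩ := eventually_atTop.mp <| (tendsto_pow_atTop_atTop_of_one_lt hp.one_lt).eventually
    (eventually_notMem_pow_smul_top hprime.ne_top hx0)
  refine ⟨E, fun e he => exists_residueField_retract (N := FrobRes R p e M) (x := x) ?_ ?_⟩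
  · -- the twisted action is `r • x = r ^ p ^ e • x`
    exact fun r hr => hann _ (Ideal.pow_mem_of_mem _ hr _ (pow_pos hp.pos e))
  · exact fun h => hE e he (FrobRes.mem_pow_smul_top_of_mem_smul_top h)

/-- Dao.  Let `(R, 𝔪, k)` be an `F`-finite local ring of prime
characteristic `p` and `M` a finitely generated `R`-module with `depth_R(M) = 0`
(equivalently, `𝔪` is an associated prime of `M`).  Then for all sufficiently large
`e`, the residue field `k` is a direct summand of `{}^{f^e} M`. -/
theorem residueField_summand_of_depth_zero (R : Type u) [CommRing R]
    [IsNoetherianRing R] [IsLocalRing R] (p : ℕ) [Fact p.Prime] [CharP R p]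
    (hFf : IsFFinite R p)
    (M : Type u) [AddCommGroup M] [Module R M] [Module.Finite R M]
    (hdepth : IsLocalRing.maximalIdeal R ∈ associatedPrimes R M) :
    ∃ E : ℕ, ∀ e : ℕ, E ≤ e →
      ∃ (ι : IsLocalRing.ResidueField R →ₗ[R] FrobRes R p e M)
        (π : FrobRes R p e M →ₗ[R] IsLocalRing.ResidueField R),
          π ∘ₗ ι = LinearMap.id :=
  residueField_summand_of_depth_zero_general R p M hdepth
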